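/- arXiv:2305.12119 — 8 statements merged into one kernel-verified Lean document; each statement's English description precedes it below -/
import Mathlib

section
/- If p : Fin n × Fin n → ℝ is a doubly stochastic matrix (all entries nonnegative, every row sums to 1, every column sums to 1), then there exists a permutation σ of Fin n such that for every i, p (i, σ i) ≥ 1/n². -/
/-!
Hall's theorem applied to the bipartite graph of entries `≥ c`: if a set `S` of rows had fewer
than `#S` such neighbours `N`, then the rows of `S` would carry mass `≤ #N` inside `N` (columns
sum to at most `1`) and mass `< #S · #Nᶜ · c ≤ 1` outside it, contradicting that they carry total
mass `#S`. With `c = 1/n²` this gives the permutation.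
-/

open Finset

theorem Finset.sum_lt_of_forall_lt {ι : Type*} {s : Finset ι} {f : ι → ℝ} {b c : ℝ}
    (hb : 0 < b) (hf : ∀ x ∈ s, f x < c) (hsc : #s * c ≤ b) : ∑ x ∈ s, f x < b := by
  rcases s.eq_empty_or_nonempty with rfl | hs
  · simpa using hb
  calc ∑ x ∈ s, f x < ∑ _x ∈ s, c := sum_lt_sum_of_nonempty hs hf
    _ = #s * c := by rw [sum_const, nsmul_eq_mul]
    _ ≤ b := hsc

section LargeEntries

variable {α β : Type*} [Fintype α] [Fintype β] [DecidableEq β]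

theorem card_le_card_biUnion_filter_le_of_sum_eq_one (p : α → β → ℝ) (hp : ∀ i j, 0 ≤ p i j)
    (hrow : ∀ i, ∑ j, p i j = 1) (hcol : ∀ j, ∑ i, p i j ≤ 1) {c : ℝ} (hc₀ : 0 ≤ c)
    (hc : Fintype.card α * Fintype.card β * c ≤ 1) (S : Finset α) :
    #S ≤ #(S.biUnion fun i => {j | c ≤ p i j}) := by
  set N := S.biUnion fun i => ({j | c ≤ p i j} : Finset β)
  have mass_inside : ∑ i ∈ S, ∑ j ∈ N, p i j ≤ #N := by
    rw [sum_comm]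
    calc ∑ j ∈ N, ∑ i ∈ S, p i j ≤ ∑ _j ∈ N, (1 : ℝ) := sum_le_sum fun j _ =>
          (sum_le_sum_of_subset_of_nonneg (subset_univ S) fun i _ _ => hp i j).trans (hcol j)
      _ = #N := by simp
  have mass_outside : ∑ i ∈ S, ∑ j ∈ Nᶜ, p i j < 1 := by
    rw [← sum_product']
    refine sum_lt_of_forall_lt one_pos (c := c) ?_ ?_
    · rintro ⟨i, j⟩ hij
      rw [mem_product, mem_compl] at hij
      by_contra! h
      exact hij.2 (mem_biUnion.2 ⟨i, hij.1, by simpa using h⟩)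
    · calc (#(S ×ˢ Nᶜ) : ℝ) * c ≤ Fintype.card (α × β) * c := by
            gcongr; exact card_le_univ _
        _ ≤ 1 := by rwa [Fintype.card_prod, Nat.cast_mul]
  have : (#S : ℝ) < #N + 1 := calc
    (#S : ℝ) = ∑ i ∈ S, ∑ j, p i j := by simp [hrow]
    _ = ∑ i ∈ S, ∑ j ∈ N, p i j + ∑ i ∈ S, ∑ j ∈ Nᶜ, p i j := by
      rw [← sum_add_distrib]; simp only [sum_add_sum_compl]
    _ < #N + 1 := add_lt_add_of_le_of_lt mass_inside mass_outside
  exact Nat.lt_add_one_iff.mp (by exact_mod_cast this)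

theorem exists_injective_le_apply_of_sum_eq_one (p : α → β → ℝ) (hp : ∀ i j, 0 ≤ p i j)
    (hrow : ∀ i, ∑ j, p i j = 1) (hcol : ∀ j, ∑ i, p i j ≤ 1) {c : ℝ} (hc₀ : 0 ≤ c)
    (hc : Fintype.card α * Fintype.card β * c ≤ 1) :
    ∃ f : α → β, Function.Injective f ∧ ∀ i, c ≤ p i (f i) := by
  obtain ⟨f, hf, hfc⟩ := (all_card_le_biUnion_card_iff_exists_injective _).mp
    (card_le_card_biUnion_filter_le_of_sum_eq_one p hp hrow hcol hc₀ hc)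
  exact ⟨f, hf, fun i => by simpa using hfc i⟩

end LargeEntries

/-- If `p` is a doubly stochastic matrix, there is a permutation `σ` with
`p (i, σ i) ≥ 1/n²` for every `i`. -/
theorem stmt0 (n : ℕ) (p : Fin n × Fin n → ℝ)
    (hnn : ∀ ij, 0 ≤ p ij)
    (hrow : ∀ i : Fin n, ∑ j, p (i, j) = 1)
    (hcol : ∀ j : Fin n, ∑ i, p (i, j) = 1) :
    ∃ σ : Equiv.Perm (Fin n), ∀ i, p (i, σ i) ≥ 1 / (n : ℝ) ^ 2 := by
  have hc : (Fintype.card (Fin n) : ℝ) * Fintype.card (Fin n) * (1 / (n : ℝ) ^ 2) ≤ 1 := by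
    rw [Fintype.card_fin, ← sq, mul_one_div]
    exact div_self_le_one _
  obtain ⟨f, hf, hfp⟩ := exists_injective_le_apply_of_sum_eq_one (fun i j => p (i, j))
    (fun i j => hnn (i, j)) hrow (fun j => (hcol j).le) (by positivity) hc
  exact ⟨Equiv.ofBijective f (Finite.injective_iff_bijective.mp hf), hfp⟩
end

section
/- Let (X, d) be a metric space, let S₁, S₂ be finite sets of agents with representatives r₁, r₂ ∈ X, and suppose nonnegative reals d_k are assigned to agents a_k. Assume that for every agent a_i ∈ S₁, d(a_i, r₁) ≤ -d_i + 2^λ₁ · Σ_{a_k ∈ S₁} d_k, and that there exists a point b ∈ X with d(r₁, b) ≤ 2^λ₁ · Σ_{a_k ∈ S₁} d_k and d(b, r₂) ≤ 2^λ₂ · Σ_{a_k ∈ S₂} d_k, where λ₁ ≤ λ₂. Then for every a_i ∈ S₁, d(a_i, r₂) ≤ -d_i + 2^(max (λ₁+1) λ₂) · Σ_{a_k ∈ S₁ ∪ S₂} d_k. -/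
open Finset

theorem stmt2_general {X : Type*} [MetricSpace X] [DecidableEq X] (S1 S2 : Finset X) (hdisj : Disjoint S1 S2)
    (r1 r2 b : X) (dd : X → ℝ) (hdd : ∀ a, 0 ≤ dd a) (l1 l2 : ℕ)
    (h1 : ∀ a ∈ S1, dist a r1 ≤ -dd a + (2 : ℝ) ^ l1 * ∑ k ∈ S1, dd k)
    (hb1 : dist r1 b ≤ (2 : ℝ) ^ l1 * ∑ k ∈ S1, dd k)
    (hb2 : dist b r2 ≤ (2 : ℝ) ^ l2 * ∑ k ∈ S2, dd k) :
    ∀ a ∈ S1, dist a r2 ≤ -dd a + (2 : ℝ) ^ max (l1 + 1) l2 * ∑ k ∈ S1 ∪ S2, dd k := by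
  intro a ha
  have hS1 : 0 ≤ ∑ k ∈ S1, dd k := sum_nonneg fun k _ => hdd k
  have hS2 : 0 ≤ ∑ k ∈ S2, dd k := sum_nonneg fun k _ => hdd k
  have hpow1 : (2 : ℝ) ^ l1 + 2 ^ l1 ≤ 2 ^ max (l1 + 1) l2 := by
    rw [← two_mul, ← pow_succ']
    exact pow_le_pow_right₀ one_le_two (le_max_left _ _)
  have hpow2 : (2 : ℝ) ^ l2 ≤ 2 ^ max (l1 + 1) l2 :=
    pow_le_pow_right₀ one_le_two (le_max_right _ _)
  calc dist a r2 ≤ dist a r1 + dist r1 b + dist b r2 := dist_triangle4 a r1 b r2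
    _ ≤ -dd a + (2 ^ l1 + 2 ^ l1) * ∑ k ∈ S1, dd k + 2 ^ l2 * ∑ k ∈ S2, dd k := by
      linarith [h1 a ha]
    _ ≤ -dd a + 2 ^ max (l1 + 1) l2 * ∑ k ∈ S1, dd k
          + 2 ^ max (l1 + 1) l2 * ∑ k ∈ S2, dd k := by
      gcongr
    _ = -dd a + (2 : ℝ) ^ max (l1 + 1) l2 * ∑ k ∈ S1 ∪ S2, dd k := by
      rw [sum_union hdisj]
      ring

/-- Merge step invariant of the RepMatch mechanism. -/
theorem stmt2 {X : Type*} [MetricSpace X] [DecidableEq X] (S1 S2 : Finset X) (hdisj : Disjoint S1 S2)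
    (r1 r2 b : X) (dd : X → ℝ) (hdd : ∀ a, 0 ≤ dd a) (l1 l2 : ℕ) (hl : l1 ≤ l2)
    (h1 : ∀ a ∈ S1, dist a r1 ≤ -dd a + (2 : ℝ) ^ l1 * ∑ k ∈ S1, dd k)
    (hb1 : dist r1 b ≤ (2 : ℝ) ^ l1 * ∑ k ∈ S1, dd k)
    (hb2 : dist b r2 ≤ (2 : ℝ) ^ l2 * ∑ k ∈ S2, dd k) :
    ∀ a ∈ S1, dist a r2 ≤ -dd a + (2 : ℝ) ^ max (l1 + 1) l2 * ∑ k ∈ S1 ∪ S2, dd k :=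
  stmt2_general S1 S2 hdisj r1 r2 b dd hdd l1 l2 h1 hb1 hb2
end

section
/- On the real line, consider n agents with agent i at position 2^(i-1) for i = 1,...,n, and n items with item j at position 2^j for j = 1,...,n-1 and item n at position 0. The matching that pairs agent i with item i for each i has total cost 2^n - 1, while the matching pairing agent 1 with item n and agent i with item i-1 for i ≥ 2 has total cost 1. Hence the first matching has cost (2^n - 1) times the minimum-cost matching. -/
/-!
Agent `2 ^ i` is at distance `2 ^ i` from item `i`, so the identity matching costs the geometric
sum `1 + 2 + ⋯ + 2 ^ (n - 1)`; the cyclic shift puts every agent but the first exactly on its item,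
and the first one at distance `1` from the item at `0`.
-/

open Finset

lemma dist_two_pow_two_pow_succ (k : ℕ) : dist ((2 : ℝ) ^ k) (2 ^ (k + 1)) = 2 ^ k := by
  rw [dist_comm, Real.dist_eq, pow_succ, mul_two, add_sub_cancel_right, abs_of_pos (by positivity)]

lemma sum_range_two_pow (n : ℕ) : ∑ i ∈ range n, (2 : ℝ) ^ i = 2 ^ n - 1 := by
  rw [geom_sum_eq (by norm_num)]
  norm_num

lemma add_sub_one_mod_of_lt {n i : ℕ} (hi : i < n) :
    (i + (n - 1)) % n = if i = 0 then n - 1 else i - 1 := by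
  split_ifs with h
  · subst h
    rw [zero_add, Nat.mod_eq_of_lt (by omega)]
  · rw [show i + (n - 1) = i - 1 + n by omega, Nat.add_mod_right, Nat.mod_eq_of_lt (by omega)]

section LowerBoundInstance

variable (n : ℕ)

noncomputable abbrev itemPos (j : ℕ) : ℝ := if j = n - 1 then 0 else 2 ^ (j + 1)

lemma dist_two_pow_itemPos (i : ℕ) : dist ((2 : ℝ) ^ i) (itemPos n i) = 2 ^ i := by
  unfold itemPos
  split_ifs
  · simp
  · exact dist_two_pow_two_pow_succ i

lemma dist_two_pow_itemPos_add_sub_one {i : ℕ} (hi : i < n) :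
    dist ((2 : ℝ) ^ i) (itemPos n ((i + (n - 1)) % n)) = if i = 0 then 1 else 0 := by
  rw [add_sub_one_mod_of_lt hi]
  rcases i with _ | k
  · simp [itemPos]
  · have hk : k ≠ n - 1 := by omega
    simp [itemPos, hk]

end LowerBoundInstance

/-- The serializable lower-bound instance on the real line: agents at `2^(i-1)`,
items at `2^j` (and one item at 0).  The serial matching costs `2^n - 1`,
the shifted matching costs `1`, so the serial matching costs `2^n - 1` times
the minimum-cost matching. -/
theorem stmt5 (n : ℕ) (hn : 0 < n) (agents items : Fin n → ℝ)
    (ha : ∀ i : Fin n, agents i = 2 ^ (i : ℕ))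
    (hi : ∀ j : Fin n, items j = if (j : ℕ) = n - 1 then 0 else 2 ^ ((j : ℕ) + 1)) :
    (∑ i, dist (agents i) (items i)) = 2 ^ n - 1 ∧
    (∑ i : Fin n, dist (agents i) (items ⟨((i : ℕ) + (n - 1)) % n, Nat.mod_lt _ hn⟩)) = 1 ∧
    (∑ i, dist (agents i) (items i)) =
      (2 ^ n - 1) *
        ∑ i : Fin n, dist (agents i) (items ⟨((i : ℕ) + (n - 1)) % n, Nat.mod_lt _ hn⟩) := by
  have serial : (∑ i, dist (agents i) (items i)) = 2 ^ n - 1 := by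
    simp only [ha, hi, dist_two_pow_itemPos n]
    rw [Fin.sum_univ_eq_sum_range (fun i => (2 : ℝ) ^ i), sum_range_two_pow]
  have shifted :
      (∑ i : Fin n, dist (agents i) (items ⟨((i : ℕ) + (n - 1)) % n, Nat.mod_lt _ hn⟩)) = 1 := by
    simp only [ha, hi, fun i : Fin n => dist_two_pow_itemPos_add_sub_one n i.isLt]
    rw [Fin.sum_univ_eq_sum_range (fun i => if i = 0 then (1 : ℝ) else 0),
      sum_ite_eq' _ _ (fun _ => (1 : ℝ)), if_pos (mem_range.2 hn)]
  exact ⟨serial, shifted, by rw [serial, shifted, mul_one]⟩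
end

section
/- Let G be a bipartite graph on agent set A and item set B with |A| = |B| = n, in a metric space, let M be a partial matching of cost c covering subsets A' ⊆ A and B' ⊆ B with |A'| = |B'| (all but k agents), and let N be a perfect matching of A and B of cost C; then overlaying M and N and following alternating paths extends M to a perfect matching M' of cost at most 2c + C. -/
section Aux

variable {X : Type*}

private lemma aux_iter_mem {s : Finset X} {f : X → X} (hm : ∀ a ∈ s, f a ∈ s) :
    ∀ n, ∀ a ∈ s, f^[n] a ∈ s := by
  intro n
  induction n with
  | zero => simp
  | succ n ih =>
    intro a ha
    rw [Function.iterate_succ_apply']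
    exact hm _ (ih a ha)

private lemma aux_iter_inj {s : Finset X} {f : X → X} (hm : ∀ a ∈ s, f a ∈ s)
    (hinj : ∀ a ∈ s, ∀ b ∈ s, f a = f b → a = b) :
    ∀ n, ∀ a ∈ s, ∀ b ∈ s, f^[n] a = f^[n] b → a = b := by
  intro n
  induction n with
  | zero => simp
  | succ n ih =>
    intro a ha b hb h
    rw [Function.iterate_succ_apply', Function.iterate_succ_apply'] at h
    exact ih a ha b hb (hinj _ (aux_iter_mem hm n a ha) _ (aux_iter_mem hm n b hb) h)

private lemma aux_return {s : Finset X} {f : X → X} (hm : ∀ a ∈ s, f a ∈ s)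
    (hinj : ∀ a ∈ s, ∀ b ∈ s, f a = f b → a = b) {a : X} (ha : a ∈ s) :
    ∃ n, 0 < n ∧ f^[n] a = a := by
  obtain ⟨i, hi, j, hj, hne, heq⟩ :=
    Finset.exists_ne_map_eq_of_card_lt_of_maps_to (s := Finset.range (s.card + 1))
      (t := s) (by simp) (fun i _ => aux_iter_mem hm i a ha)
  wlog hij : i < j generalizing i j
  · exact this j hj i hi hne.symm heq.symm (by omega)
  refine ⟨j - i, by omega, ?_⟩
  have h2 : f^[i] (f^[j - i] a) = f^[i] a := by
    rw [← Function.iterate_add_apply, show i + (j - i) = j by omega]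
    exact heq.symm
  exact aux_iter_inj hm hinj i _ (aux_iter_mem hm _ a ha) a ha h2

private lemma aux_bijOn_union {f : X → X} {s₁ s₂ t₁ t₂ : Set X}
    (h₁ : Set.BijOn f s₁ t₁) (h₂ : Set.BijOn f s₂ t₂) (hd : Disjoint t₁ t₂) :
    Set.BijOn f (s₁ ∪ s₂) (t₁ ∪ t₂) := by
  refine Set.BijOn.union h₁ h₂ ?_
  rintro a (ha | ha) b (hb | hb) h
  · exact h₁.injOn ha hb h
  · exact absurd h (hd.ne_of_mem (h₁.mapsTo ha) (h₂.mapsTo hb))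
  · exact absurd h.symm (hd.ne_of_mem (h₁.mapsTo hb) (h₂.mapsTo ha))
  · exact h₂.injOn ha hb h

end Aux

/-- A partial matching of cost `c` can be extended to a perfect matching of cost
at most `2c + C`, where `C` is the cost of some perfect matching. -/
theorem stmt6 {X : Type*} [MetricSpace X] (A B A' B' : Finset X)
    (hA' : A' ⊆ A) (hB' : B' ⊆ B) (hcard : A.card = B.card)
    (M N : X → X) (hM : Set.BijOn M ↑A' ↑B') (hN : Set.BijOn N ↑A ↑B) :
    ∃ M' : X → X, Set.BijOn M' ↑A ↑B ∧ (∀ a ∈ A', M' a = M a) ∧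
      ∑ a ∈ A, dist a (M' a) ≤ 2 * (∑ a ∈ A', dist a (M a)) + ∑ a ∈ A, dist a (N a) := by
  classical
  rcases Finset.eq_empty_or_nonempty A with hAe | hAne
  · have hA'e : A' = ∅ := Finset.subset_empty.mp (hAe ▸ hA')
    exact ⟨N, hN, fun a ha => by simp [hA'e] at ha, by simp [hAe, hA'e]⟩
  haveI hXne : Nonempty X := ⟨hAne.choose⟩
  -- cardinalities
  have hB'img : A'.image M = B' := by
    apply Finset.coe_injective
    rw [Finset.coe_image, hM.image_eq]
  have hcard' : A'.card = B'.card := by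
    rw [← hB'img]
    exact (Finset.card_image_of_injOn hM.injOn).symm
  have hcards : (A \ A').card = (B \ B').card := by
    rw [Finset.card_sdiff_of_subset hA', Finset.card_sdiff_of_subset hB', hcard, hcard']
  -- an arbitrary bijection P : A \ A' → B \ B'
  set e := Finset.equivOfCardEq hcards with he
  set P : X → X := fun x => if h : x ∈ A \ A' then (e ⟨x, h⟩ : X) else x with hP
  have hPmaps : ∀ x ∈ A \ A', P x ∈ B \ B' := by
    intro x hx
    simp only [hP, dif_pos hx]
    exact (e ⟨x, hx⟩).2
  have hPinj : ∀ x ∈ A \ A', ∀ y ∈ A \ A', P x = P y → x = y := by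
    intro x hx y hy h
    simp only [hP, dif_pos hx, dif_pos hy] at h
    exact congrArg Subtype.val (e.injective (Subtype.coe_injective h))
  have hPbij : Set.BijOn P ↑(A \ A') ↑(B \ B') := by
    refine ⟨fun x hx => hPmaps x hx, fun x hx y hy h => hPinj x hx y hy h, ?_⟩
    intro b hb
    have hb' : b ∈ B \ B' := hb
    refine ⟨(e.symm ⟨b, hb'⟩ : X), (e.symm ⟨b, hb'⟩).2, ?_⟩
    simp only [hP, dif_pos (e.symm ⟨b, hb'⟩).2]
    have : (⟨(e.symm ⟨b, hb'⟩ : X), (e.symm ⟨b, hb'⟩).2⟩ : {x // x ∈ A \ A'}) =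
        e.symm ⟨b, hb'⟩ := rfl
    rw [this, Equiv.apply_symm_apply]
  -- total extension Mb of M
  set Mb : X → X := fun x => if x ∈ A' then M x else P x with hMb
  have hMbA' : ∀ x ∈ A', Mb x = M x := fun x hx => by simp [hMb, hx]
  have hMbP : ∀ x, x ∉ A' → Mb x = P x := fun x hx => by simp [hMb, hx]
  have hsplitA : (↑A' : Set X) ∪ ↑(A \ A') = ↑A := by
    rw [← Finset.coe_union, Finset.union_sdiff_of_subset hA']
  have hsplitB : (↑B' : Set X) ∪ ↑(B \ B') = ↑B := by
    rw [← Finset.coe_union, Finset.union_sdiff_of_subset hB']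
  have hdisjB : Disjoint (↑B' : Set X) ↑(B \ B') := by
    rw [Finset.disjoint_coe]
    exact Finset.disjoint_sdiff
  have hMbbij : Set.BijOn Mb ↑A ↑B := by
    rw [← hsplitA, ← hsplitB]
    refine aux_bijOn_union ?_ ?_ hdisjB
    · exact (Set.EqOn.bijOn_iff (fun x hx => (hMbA' x hx).symm)).mp hM
    · refine (Set.EqOn.bijOn_iff (fun x hx => ?_)).mp hPbij
      exact (hMbP x (Finset.mem_sdiff.mp hx).2).symm
  -- inverse of Mb on A
  set invb : X → X := Function.invFunOn Mb ↑A with hinvb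
  have hsurj : ∀ b ∈ B, ∃ a ∈ (↑A : Set X), Mb a = b := by
    intro b hb
    obtain ⟨a, ha, h⟩ := hMbbij.surjOn (Finset.mem_coe.mpr hb)
    exact ⟨a, ha, h⟩
  have hinv_mem : ∀ b ∈ B, invb b ∈ A :=
    fun b hb => Finset.mem_coe.mp (Function.invFunOn_mem (hsurj b hb))
  have hinv_right : ∀ b ∈ B, Mb (invb b) = b :=
    fun b hb => Function.invFunOn_eq (hsurj b hb)
  -- the permutation p = Mb⁻¹ ∘ N of A
  set p : X → X := fun x => invb (N x) with hp
  have hNA : ∀ a ∈ A, N a ∈ B := fun a ha => Finset.mem_coe.mp (hN.mapsTo ha)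
  have hpA : ∀ a ∈ A, p a ∈ A := fun a ha => hinv_mem _ (hNA a ha)
  have hMp : ∀ a ∈ A, Mb (p a) = N a := fun a ha => hinv_right _ (hNA a ha)
  have hpinj : ∀ a ∈ A, ∀ b ∈ A, p a = p b → a = b := by
    intro a ha b hb h
    have hNab : N a = N b := by rw [← hMp a ha, ← hMp b hb, h]
    exact hN.injOn (Finset.mem_coe.mpr ha) (Finset.mem_coe.mpr hb) hNab
  have hitmem : ∀ n, ∀ a ∈ A, p^[n] a ∈ A := aux_iter_mem hpA
  have hitinj : ∀ n, ∀ a ∈ A, ∀ b ∈ A, p^[n] a = p^[n] b → a = b := aux_iter_inj hpA hpinj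
  -- exit times
  have hex : ∀ a, a ∈ A → a ∉ A' → ∃ k, p^[k + 1] a ∉ A' := by
    intro a ha ha'
    obtain ⟨n, hn, hfix⟩ := aux_return hpA hpinj ha
    exact ⟨n - 1, by rw [show n - 1 + 1 = n by omega, hfix]; exact ha'⟩
  set K : X → ℕ := fun a => if h : a ∈ A ∧ a ∉ A' then Nat.find (hex a h.1 h.2) else 0 with hK
  have hKeq : ∀ a (ha : a ∈ A) (ha' : a ∉ A'), K a = Nat.find (hex a ha ha') := by
    intro a ha ha'
    simp only [hK]
    rw [dif_pos ⟨ha, ha'⟩]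
  have hKspec : ∀ a ∈ A, a ∉ A' → p^[K a + 1] a ∉ A' := by
    intro a ha ha'
    rw [hKeq a ha ha']
    exact Nat.find_spec (hex a ha ha')
  have hKmin : ∀ a ∈ A, a ∉ A' → ∀ m, 1 ≤ m → m ≤ K a → p^[m] a ∈ A' := by
    intro a ha ha' m h1 h2
    rw [hKeq a ha ha'] at h2
    have := Nat.find_min (hex a ha ha') (m := m - 1) (by omega)
    rw [not_not, show m - 1 + 1 = m by omega] at this
    exact this
  -- the extended matching
  set M' : X → X := fun x => if x ∈ A' then M x else if x ∈ A then N (p^[K x] x) else x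
    with hM'def
  have hM'A' : ∀ a ∈ A', M' a = M a := fun a ha => by simp [hM'def, ha]
  have hM'N : ∀ a ∈ A, a ∉ A' → M' a = N (p^[K a] a) := by
    intro a ha ha'
    simp [hM'def, ha, ha']
  have hM'val : ∀ a ∈ A, a ∉ A' → M' a = P (p^[K a + 1] a) := by
    intro a ha ha'
    have h2 : Mb (p^[K a + 1] a) = N (p^[K a] a) := by
      rw [Function.iterate_succ_apply']
      exact hMp _ (hitmem _ a ha)
    rw [hM'N a ha ha', ← h2]
    exact hMbP _ (hKspec a ha ha')
  have hM'maps : ∀ a ∈ A, a ∉ A' → M' a ∈ B \ B' := by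
    intro a ha ha'
    rw [hM'val a ha ha']
    exact hPmaps _ (Finset.mem_sdiff.mpr ⟨hitmem _ a ha, hKspec a ha ha'⟩)
  -- key cancellation facts
  have hcancel : ∀ a ∈ A, ∀ b ∈ A, ∀ i j : ℕ, i ≤ j → p^[i] a = p^[j] b → a = p^[j - i] b := by
    intro a ha b hb i j hij h
    apply hitinj i a ha _ (hitmem _ b hb)
    rw [h, ← Function.iterate_add_apply, show i + (j - i) = j by omega]
  have hsame : ∀ a ∈ A, a ∉ A' → ∀ b ∈ A, b ∉ A' → ∀ i j : ℕ, i ≤ j → j - i ≤ K b →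
      p^[i] a = p^[j] b → a = b ∧ i = j := by
    intro a ha ha' b hb hb' i j hij hle h
    have hab := hcancel a ha b hb i j hij h
    rcases Nat.eq_or_lt_of_le hij with heq | hlt
    · refine ⟨?_, heq⟩
      rw [hab, show j - i = 0 by omega]
      simp
    · exfalso
      apply ha'
      rw [hab]
      exact hKmin b hb hb' (j - i) (by omega) hle
  have hM'inj : ∀ a ∈ A, a ∉ A' → ∀ b ∈ A, b ∉ A' → M' a = M' b → a = b := by
    intro a ha ha' b hb hb' h
    rw [hM'val a ha ha', hM'val b hb hb'] at h
    have h2 : p^[K a + 1] a = p^[K b + 1] b :=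
      hPinj _ (Finset.mem_sdiff.mpr ⟨hitmem _ a ha, hKspec a ha ha'⟩)
        _ (Finset.mem_sdiff.mpr ⟨hitmem _ b hb, hKspec b hb hb'⟩) h
    rcases le_total (K a) (K b) with hk | hk
    · exact (hsame a ha ha' b hb hb' (K a + 1) (K b + 1) (by omega) (by omega) h2).1
    · exact ((hsame b hb hb' a ha ha' (K b + 1) (K a + 1) (by omega) (by omega) h2.symm).1).symm
  -- M' is a bijection from A to B
  have hbij2 : Set.BijOn M' ↑(A \ A') ↑(B \ B') := by
    refine ⟨?_, ?_, ?_⟩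
    · intro x hx
      obtain ⟨h1, h2⟩ := Finset.mem_sdiff.mp hx
      exact Finset.mem_coe.mpr (hM'maps x h1 h2)
    · intro x hx y hy h
      obtain ⟨hx1, hx2⟩ := Finset.mem_sdiff.mp hx
      obtain ⟨hy1, hy2⟩ := Finset.mem_sdiff.mp hy
      exact hM'inj x hx1 hx2 y hy1 hy2 h
    · intro b hb
      have hb' : b ∈ B \ B' := hb
      obtain ⟨a, ha, hab⟩ := Finset.surj_on_of_inj_on_of_card_le
        (s := A \ A') (t := B \ B') (fun a _ => M' a)
        (fun a ha => hM'maps a (Finset.mem_sdiff.mp ha).1 (Finset.mem_sdiff.mp ha).2)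
        (fun a₁ a₂ h₁ h₂ h => hM'inj a₁ (Finset.mem_sdiff.mp h₁).1 (Finset.mem_sdiff.mp h₁).2
          a₂ (Finset.mem_sdiff.mp h₂).1 (Finset.mem_sdiff.mp h₂).2 h)
        (le_of_eq hcards.symm) b hb'
      exact ⟨a, ha, hab.symm⟩
  have hM'bij : Set.BijOn M' ↑A ↑B := by
    rw [← hsplitA, ← hsplitB]
    refine aux_bijOn_union ?_ hbij2 hdisjB
    exact (Set.EqOn.bijOn_iff (fun x hx => (hM'A' x hx).symm)).mp hM
  -- cost estimate along the alternating path
  set g : X → ℝ := fun x => dist x (M x) + dist x (N x) with hg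
  have hchain : ∀ a ∈ A, ∀ k : ℕ, (∀ m, 1 ≤ m → m ≤ k → p^[m] a ∈ A') →
      dist a (N (p^[k] a)) ≤ dist a (N a) + ∑ i ∈ Finset.Icc 1 k, g (p^[i] a) := by
    intro a ha k
    induction k with
    | zero => intro _; simp
    | succ k ih =>
      intro hmem
      have ih' := ih (fun m h1 h2 => hmem m h1 (by omega))
      have hu : p^[k + 1] a ∈ A' := hmem (k + 1) (by omega) le_rfl
      have hMu : M (p^[k + 1] a) = N (p^[k] a) := by
        have h1 : Mb (p^[k + 1] a) = N (p^[k] a) := by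
          rw [Function.iterate_succ_apply']
          exact hMp _ (hitmem k a ha)
        rw [← h1]
        exact (hMbA' _ hu).symm
      have t1 : dist a (M (p^[k + 1] a)) ≤ dist a (N a) + ∑ i ∈ Finset.Icc 1 k, g (p^[i] a) := by
        rw [hMu]; exact ih'
      have t2 : dist (M (p^[k + 1] a)) (N (p^[k + 1] a)) ≤ g (p^[k + 1] a) := by
        calc dist (M (p^[k + 1] a)) (N (p^[k + 1] a))
            ≤ dist (M (p^[k + 1] a)) (p^[k + 1] a) + dist (p^[k + 1] a) (N (p^[k + 1] a)) :=
              dist_triangle _ _ _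
          _ = g (p^[k + 1] a) := by rw [hg]; simp [dist_comm]
      have t0 : dist a (N (p^[k + 1] a)) ≤
          dist a (M (p^[k + 1] a)) + dist (M (p^[k + 1] a)) (N (p^[k + 1] a)) :=
        dist_triangle _ _ _
      have hsum : ∑ i ∈ Finset.Icc 1 (k + 1), g (p^[i] a)
          = ∑ i ∈ Finset.Icc 1 k, g (p^[i] a) + g (p^[k + 1] a) :=
        Finset.sum_Icc_succ_top (by omega) _
      rw [hsum]
      linarith
  have hcost : ∀ a ∈ A, a ∉ A' →
      dist a (M' a) ≤ dist a (N a) + ∑ i ∈ Finset.Icc 1 (K a), g (p^[i] a) := by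
    intro a ha ha'
    rw [hM'N a ha ha']
    exact hchain a ha (K a) (fun m h1 h2 => hKmin a ha ha' m h1 h2)
  -- the interior points of the paths are pairwise distinct elements of A'
  have hgnn : ∀ x, 0 ≤ g x := fun x => add_nonneg dist_nonneg dist_nonneg
  have hsum2 : ∑ a ∈ A \ A', ∑ i ∈ Finset.Icc 1 (K a), g (p^[i] a) ≤ ∑ x ∈ A', g x := by
    rw [Finset.sum_sigma']
    set S := (A \ A').sigma (fun a => Finset.Icc 1 (K a)) with hS
    have himg : ∀ q ∈ S, p^[q.2] q.1 ∈ A' := by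
      intro q hq
      obtain ⟨hq1, hq2⟩ := Finset.mem_sigma.mp hq
      obtain ⟨hqA, hqA'⟩ := Finset.mem_sdiff.mp hq1
      obtain ⟨h1, h2⟩ := Finset.mem_Icc.mp hq2
      exact hKmin _ hqA hqA' _ h1 h2
    have hinjS : ∀ q ∈ S, ∀ r ∈ S, p^[q.2] q.1 = p^[r.2] r.1 → q = r := by
      intro q hq r hr h
      obtain ⟨hq1, hq2⟩ := Finset.mem_sigma.mp hq
      obtain ⟨hqA, hqA'⟩ := Finset.mem_sdiff.mp hq1
      obtain ⟨hq3, hq4⟩ := Finset.mem_Icc.mp hq2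
      obtain ⟨hr1, hr2⟩ := Finset.mem_sigma.mp hr
      obtain ⟨hrA, hrA'⟩ := Finset.mem_sdiff.mp hr1
      obtain ⟨hr3, hr4⟩ := Finset.mem_Icc.mp hr2
      rcases le_total q.2 r.2 with hle | hle
      · obtain ⟨h1, h2⟩ := hsame q.1 hqA hqA' r.1 hrA hrA' q.2 r.2 hle (by omega) h
        exact Sigma.ext h1 (heq_of_eq h2)
      · obtain ⟨h1, h2⟩ := hsame r.1 hrA hrA' q.1 hqA hqA' r.2 q.2 hle (by omega) h.symm
        exact (Sigma.ext h1 (heq_of_eq h2)).symm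
    calc ∑ q ∈ S, g (p^[q.2] q.1)
        = ∑ x ∈ S.image (fun q => p^[q.2] q.1), g x :=
          (Finset.sum_image (fun q hq r hr h => hinjS q hq r hr h)).symm
      _ ≤ ∑ x ∈ A', g x :=
          Finset.sum_le_sum_of_subset_of_nonneg
            (Finset.image_subset_iff.mpr himg) (fun x _ _ => hgnn x)
  -- put everything together
  refine ⟨M', hM'bij, hM'A', ?_⟩
  have hsp1 : ∑ a ∈ A, dist a (M' a)
      = ∑ a ∈ A \ A', dist a (M' a) + ∑ a ∈ A', dist a (M' a) :=
    (Finset.sum_sdiff hA').symm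
  have hsp2 : ∑ a ∈ A, dist a (N a)
      = ∑ a ∈ A \ A', dist a (N a) + ∑ a ∈ A', dist a (N a) :=
    (Finset.sum_sdiff hA').symm
  have e1 : ∑ a ∈ A', dist a (M' a) = ∑ a ∈ A', dist a (M a) :=
    Finset.sum_congr rfl (fun a ha => by rw [hM'A' a ha])
  have e2 : ∑ a ∈ A \ A', dist a (M' a)
      ≤ ∑ a ∈ A \ A', dist a (N a) + ∑ a ∈ A \ A', ∑ i ∈ Finset.Icc 1 (K a), g (p^[i] a) := by
    rw [← Finset.sum_add_distrib]
    exact Finset.sum_le_sum (fun a ha =>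
      hcost a (Finset.mem_sdiff.mp ha).1 (Finset.mem_sdiff.mp ha).2)
  have e3 : ∑ x ∈ A', g x = ∑ a ∈ A', dist a (M a) + ∑ a ∈ A', dist a (N a) := by
    rw [hg, Finset.sum_add_distrib]
  rw [hsp1, hsp2, e1]
  linarith [hsum2]
end

section
/- Define f : ℕ → ℝ by the recurrence: for each i with 0 ≤ i < n, M_{i+1} ≤ M_i + N_i/(n - i) and N_{i+1} ≤ (1 + 1/(n-i))·N_i, with M_0 = 0 and N_0 = C for some C ≥ 0 (all quantities nonnegative). Then for all 0 ≤ i ≤ n, N_i ≤ (n+1)/(n+1-i) · C and M_i ≤ i/(n+1-i) · C. -/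
/-!
Induct on `i`, first for `N` and then for `M` using the bound on `N`. With `m = n + 1 - i`, one step
of the recurrences preserves the bounds because of the identities
`(1 + 1 / (m - 1)) * ((n + 1) / m) = (n + 1) / (m - 1)` and
`i / m + (n + 1) / (m * (m - 1)) = (i + 1) / (m - 1)`, the latter since `i (m - 1) + n + 1 = (i + 1) m`.
-/

section TruncatedRSD

variable {n : ℕ} {C : ℝ} {M N : ℕ → ℝ}

lemma sub_cast_pos_of_lt {i : ℕ} (hi : i < n) : (0 : ℝ) < n - i :=
  sub_pos.mpr (Nat.cast_lt.mpr hi)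

lemma add_one_sub_cast_succ (i : ℕ) : (n : ℝ) + 1 - ((i + 1 : ℕ) : ℝ) = n - i := by
  push_cast
  ring

lemma residual_le_of_recurrence (hN0 : N 0 = C)
    (hNrec : ∀ i < n, N (i + 1) ≤ (1 + 1 / ((n : ℝ) - i)) * N i) :
    ∀ i ≤ n, N i ≤ ((n : ℝ) + 1) / ((n : ℝ) + 1 - i) * C := by
  intro i
  induction i with
  | zero =>
    intro _
    rw [hN0, Nat.cast_zero, sub_zero, div_self (by positivity), one_mul]
  | succ i ih =>
    intro (hi : i < n)
    have hni := sub_cast_pos_of_lt hi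
    have hmi : (0 : ℝ) < n + 1 - i := by linarith
    calc N (i + 1) ≤ (1 + 1 / ((n : ℝ) - i)) * N i := hNrec i hi
      _ ≤ (1 + 1 / ((n : ℝ) - i)) * (((n : ℝ) + 1) / ((n : ℝ) + 1 - i) * C) := by
          gcongr
          exact ih hi.le
      _ = ((n : ℝ) + 1) / ((n : ℝ) + 1 - ((i + 1 : ℕ) : ℝ)) * C := by
          rw [add_one_sub_cast_succ]
          field_simp
          ring

lemma partial_le_of_recurrence (hM0 : M 0 = 0)
    (hN : ∀ i ≤ n, N i ≤ ((n : ℝ) + 1) / ((n : ℝ) + 1 - i) * C)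
    (hMrec : ∀ i < n, M (i + 1) ≤ M i + N i / ((n : ℝ) - i)) :
    ∀ i ≤ n, M i ≤ (i : ℝ) / ((n : ℝ) + 1 - i) * C := by
  intro i
  induction i with
  | zero =>
    intro _
    simp [hM0]
  | succ i ih =>
    intro (hi : i < n)
    have hni := sub_cast_pos_of_lt hi
    have hmi : (0 : ℝ) < n + 1 - i := by linarith
    calc M (i + 1) ≤ M i + N i / ((n : ℝ) - i) := hMrec i hi
      _ ≤ (i : ℝ) / ((n : ℝ) + 1 - i) * C
          + ((n : ℝ) + 1) / ((n : ℝ) + 1 - i) * C / ((n : ℝ) - i) := by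
          gcongr
          exacts [ih hi.le, hN i hi.le]
      _ = ((i + 1 : ℕ) : ℝ) / ((n : ℝ) + 1 - ((i + 1 : ℕ) : ℝ)) * C := by
          rw [add_one_sub_cast_succ]
          field_simp
          push_cast
          ring

end TruncatedRSD

theorem stmt8_general (n : ℕ) (C : ℝ) (M N : ℕ → ℝ)
    (hM0 : M 0 = 0) (hN0 : N 0 = C)
    (hMrec : ∀ i < n, M (i + 1) ≤ M i + N i / ((n : ℝ) - i))
    (hNrec : ∀ i < n, N (i + 1) ≤ (1 + 1 / ((n : ℝ) - i)) * N i) :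
    ∀ i ≤ n, N i ≤ ((n : ℝ) + 1) / ((n : ℝ) + 1 - i) * C ∧
      M i ≤ (i : ℝ) / ((n : ℝ) + 1 - i) * C := by
  have hN := residual_le_of_recurrence hN0 hNrec
  exact fun i hi => ⟨hN i hi, partial_le_of_recurrence hM0 hN hMrec i hi⟩

/-- The inductive bookkeeping of the TruncatedRSD analysis. -/
theorem stmt8 (n : ℕ) (C : ℝ) (hC : 0 ≤ C) (M N : ℕ → ℝ)
    (hM0 : M 0 = 0) (hN0 : N 0 = C)
    (hMnn : ∀ i, 0 ≤ M i) (hNnn : ∀ i, 0 ≤ N i)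
    (hMrec : ∀ i < n, M (i + 1) ≤ M i + N i / ((n : ℝ) - i))
    (hNrec : ∀ i < n, N (i + 1) ≤ (1 + 1 / ((n : ℝ) - i)) * N i) :
    ∀ i ≤ n, N i ≤ ((n : ℝ) + 1) / ((n : ℝ) + 1 - i) * C ∧
      M i ≤ (i : ℝ) / ((n : ℝ) + 1 - i) * C :=
  stmt8_general n C M N hM0 hN0 hMrec hNrec
end

section
/- Let T be a finite rooted tree where agents occupy leaves and items occupy internal vertices, such that every subtree rooted at a non-root vertex contains one more agent than items, and the root's single child has subtree containing all agents. Suppose every non-root internal vertex has exactly two children and the tree has depth k (so there are 2^k leaves). Then for any bijection M from agents to items, there exists a leaf agent a and a set U of k distinct agents (the 'unlucky' agents), one chosen at each of the k levels along the path from the root's child to a, such that each agent in U is matched by M to an item outside the subtree containing that agent at the level where it was designated, and a is not in U. -/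
/-!
Every subtree rooted below the root holds one more agent than items, so an injective matching
must send some agent of it to an item outside it. Starting at the root's child, pick such an
unlucky agent at the current vertex and descend to a child whose subtree misses it; one exists
because the tree is binary and sibling subtrees are disjoint. After `k` steps the descent ends at
a leaf. The agent chosen at level `i` lies in the level-`i` subtree but not in the level-`i + 1`
one, hence in no deeper subtree, so the chosen agents are distinct and differ from the final leaf.
-/

open Function Finset

section Descent

variable {V : Type*} {par : V → V}

def IsDescendant (par : V → V) (u v : V) : Prop := ∃ m, par^[m] u = v

lemma IsDescendant.trans {u v w : V} :
    IsDescendant par u v → IsDescendant par v w → IsDescendant par u w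
  | ⟨m, hm⟩, ⟨n, hn⟩ => ⟨n + m, by rw [iterate_add_apply, hm, hn]⟩

lemma isDescendant_iterate_iterate (x : V) {p q : ℕ} (h : p ≤ q) :
    IsDescendant par (par^[p] x) (par^[q] x) :=
  ⟨q - p, by rw [← iterate_add_apply, Nat.sub_add_cancel h]⟩

lemma Function.IsPeriodicPt.eq_of_iterate_eq_fixedPt {r v : V} {d N : ℕ}
    (hv : IsPeriodicPt par d v) (hd : 0 < d) (hr : IsFixedPt par r) (hN : par^[N] v = r) :
    v = r :=
  calc v = par^[d * N - N] (par^[N] v) := by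
        rw [← iterate_add_apply, Nat.sub_add_cancel (Nat.le_mul_of_pos_left N hd),
          (hv.mul_const N).eq]
    _ = r := by rw [hN, iterate_fixed hr]

lemma eq_of_iterate_eq_of_ne_fixedPt {r v x : V} {m n N : ℕ} (hr : IsFixedPt par r)
    (hN : par^[N] v = r) (hvr : v ≠ r) (hm : par^[m] x = v) (hn : par^[n] x = v) : m = n := by
  wlog hmn : m ≤ n generalizing m n
  · exact (this hn hm (by omega)).symm
  by_contra hne
  have hper : IsPeriodicPt par (n - m) v := by
    rw [IsPeriodicPt, IsFixedPt, ← hm, ← iterate_add_apply, Nat.sub_add_cancel hmn, hn, hm]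
  exact hvr (hper.eq_of_iterate_eq_fixedPt (by omega) hr hN)

lemma exists_child_not_isDescendant {r x u : V} {N : ℕ} {children : Finset V}
    (hr : IsFixedPt par r) (hN : par^[N] x = r) (hxr : x ≠ r)
    (hux : IsDescendant par u x) (hne : u ≠ x)
    (hchildren : ∀ w ∈ children, par w = x) (htwo : 1 < children.card) :
    ∃ w, par w = x ∧ ¬ IsDescendant par u w := by
  obtain ⟨m, hm⟩ := hux
  obtain ⟨m, rfl⟩ := Nat.exists_eq_add_one_of_ne_zero (n := m) (by rintro rfl; exact hne hm)
  obtain ⟨w, hw, hww⟩ := children.exists_mem_ne htwo (par^[m] u)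
  refine ⟨w, hchildren w hw, fun ⟨n, hn⟩ => hww ?_⟩
  have hlevel : n + 1 = m + 1 := eq_of_iterate_eq_of_ne_fixedPt hr hN hxr
    (by rw [iterate_succ_apply', hn, hchildren w hw]) hm
  rw [← hn, Nat.succ_injective hlevel]

lemma exists_mem_inter_map_notMem_of_card_lt [DecidableEq V] {f : V → V} {s t A : Finset V}
    (hmaps : Set.MapsTo f s t) (hinj : Set.InjOn f s) (hcard : (t ∩ A).card < (s ∩ A).card) :
    ∃ u ∈ s ∩ A, f u ∉ A := by
  by_contra! h
  refine hcard.not_ge (card_le_card_of_injOn f (fun u hu => ?_) (hinj.mono ?_))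
  · exact mem_inter.2 ⟨hmaps (mem_inter.1 hu).1, h u hu⟩
  · exact coe_subset.2 inter_subset_left

lemma exists_leaf_iterate_eq {r c x : V} {leaves : Finset V} {j k : ℕ}
    (hr : IsFixedPt par r) (hc : c ≠ r) (hcr : par c = r)
    (hdepth : ∀ a ∈ leaves, par^[k + 1] a = r ∧ ∀ m ≤ k, par^[m] a ≠ r)
    (hbelow : ∀ v, v ≠ r → ∃ a ∈ leaves, IsDescendant par a v) (hx : par^[j] x = c) :
    j ≤ k ∧ ∃ a ∈ leaves, par^[k - j] a = x := by
  have hxr : x ≠ r := by rintro rfl; exact hc (hx.symm.trans (hr.iterate j))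
  obtain ⟨a, ha, m, hm⟩ := hbelow x hxr
  have hjm : par^[j + m] a = c := by rw [iterate_add_apply, hm, hx]
  have hlevel : j + m = k := by
    have hsucc : par^[j + m + 1] a = r := by rw [iterate_succ_apply', hjm, hcr]
    refine le_antisymm ?_ (not_lt.1 fun hlt => (hdepth a ha).2 _ hlt hsucc)
    by_contra! hgt
    apply hc
    rw [← hjm, ← Nat.sub_add_cancel (Nat.succ_le_of_lt hgt), iterate_add_apply,
      (hdepth a ha).1, iterate_fixed hr]
  exact ⟨by omega, a, ha, by rwa [← hlevel, Nat.add_sub_cancel_left]⟩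

lemma exists_descent {P : V → V → Prop} {c : V} {k : ℕ}
    (hstep : ∀ j < k, ∀ x, par^[j] x = c → ∃ w, par w = x ∧ ∃ u, P x u ∧ ¬ IsDescendant par u w) :
    ∃ x, par^[k] x = c ∧ ∃ U : Fin k → V, ∀ i : Fin k,
      P (par^[k - i] x) (U i) ∧ ¬ IsDescendant par (U i) (par^[k - i - 1] x) := by
  induction k with
  | zero => exact ⟨c, rfl, Fin.elim0, fun i => i.elim0⟩
  | succ k ih =>
    obtain ⟨x, hx, U, hU⟩ := ih fun j hj => hstep j (by omega)
    obtain ⟨w, hw, u, hu, hnot⟩ := hstep k (by omega) x hx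
    have hshift : ∀ i ≤ k, par^[k + 1 - i] w = par^[k - i] x := fun i hi => by
      rw [Nat.sub_add_comm hi, iterate_succ_apply, hw]
    refine ⟨w, by rwa [iterate_succ_apply, hw], Fin.snoc U u, fun i => ?_⟩
    induction i using Fin.lastCases with
    | last => simpa [hw] using ⟨hu, hnot⟩
    | cast i =>
      simp only [Fin.snoc_castSucc, Fin.val_castSucc]
      rw [Nat.sub_sub, hshift i i.is_le', hshift (i + 1) i.is_lt]
      exact hU i

lemma injective_of_descent {k : ℕ} {x : V} {U : Fin k → V}
    (hmem : ∀ i : Fin k, IsDescendant par (U i) (par^[k - i] x))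
    (hnot : ∀ i : Fin k, ¬ IsDescendant par (U i) (par^[k - i - 1] x)) : Injective U := by
  have hlt : ∀ i j : Fin k, i < j → U i ≠ U j := fun i j hij heq =>
    hnot i (heq ▸ (hmem j).trans (isDescendant_iterate_iterate x (by omega)))
  intro i j heq
  by_contra hij
  rcases lt_or_gt_of_ne hij with h | h
  · exact hlt i j h heq
  · exact hlt j i h heq.symm

end Descent

open scoped Classical in
theorem stmt12_general {V : Type*} [Fintype V] (r : V) (par : V → V) (k : ℕ)
    (hroot : par r = r)
    (leaves internal : Finset V)
    (hleaves : leaves = Finset.univ.filter (fun v => ∀ u, par u = v → u = r))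
    (hinternal : internal = Finset.univ.filter (fun v => ∃ u, par u = v ∧ u ≠ r))
    (subtree : V → Finset V)
    (hsubtree : ∀ v, subtree v = Finset.univ.filter (fun u => ∃ m, par^[m] u = v))
    (children : V → Finset V)
    (hchildren : ∀ v, children v = Finset.univ.filter (fun u => par u = v ∧ u ≠ r))
    -- the root has a single child `c`
    (c : V) (hc : c ≠ r) (hcr : par c = r)
    -- every non-root internal vertex has exactly two children
    (hbinary : ∀ v ∈ internal, v ≠ r → (children v).card = 2)
    -- every leaf is at depth exactly k+1 (so the tree has 2^k leaves)
    (hdepth : ∀ a ∈ leaves, par^[k + 1] a = r ∧ ∀ m ≤ k, par^[m] a ≠ r)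
    -- every subtree rooted at a non-root vertex has one more agent than items
    (hcount : ∀ v, v ≠ r → (leaves ∩ subtree v).card = (internal ∩ subtree v).card + 1)
    (M : V → V) (hM : Set.BijOn M ↑leaves ↑internal) :
    ∃ a ∈ leaves, ∃ U : Fin k → V, Function.Injective U ∧
      ∀ i : Fin k, U i ∈ leaves ∧ U i ≠ a ∧
        U i ∈ subtree (par^[k - (i : ℕ)] a) ∧
        M (U i) ∉ subtree (par^[k - (i : ℕ)] a) := by
  have hsub : ∀ v u, u ∈ subtree v ↔ IsDescendant par u v := by
    simp [hsubtree, IsDescendant]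
  have hbelow : ∀ v, v ≠ r → ∃ a ∈ leaves, IsDescendant par a v := fun v hv => by
    obtain ⟨a, ha⟩ := card_pos.1 (by rw [hcount v hv]; omega)
    exact ⟨a, (mem_inter.1 ha).1, (hsub v a).1 (mem_inter.1 ha).2⟩
  have hstep : ∀ j < k, ∀ x, par^[j] x = c → ∃ w, par w = x ∧
      ∃ u, (u ∈ leaves ∧ u ∈ subtree x ∧ M u ∉ subtree x) ∧ ¬ IsDescendant par u w := by
    intro j hj x hx
    have hxr : x ≠ r := by rintro rfl; exact hc (hx.symm.trans (iterate_fixed hroot j))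
    obtain ⟨-, a, ha, hax⟩ := exists_leaf_iterate_eq hroot hc hcr hdepth hbelow hx
    have hw₀ : par (par^[k - j - 1] a) = x := by
      rw [← iterate_succ_apply' par, show (k - j - 1).succ = k - j by omega, hax]
    have hw₀r : par^[k - j - 1] a ≠ r := (hdepth a ha).2 _ (by omega)
    obtain ⟨u, hu, hMu⟩ := exists_mem_inter_map_notMem_of_card_lt hM.mapsTo hM.injOn
      (by rw [hcount x hxr]; omega)
    obtain ⟨hul, hux⟩ := mem_inter.1 hu
    have hne : u ≠ x := by
      rintro rfl
      simp only [hleaves, mem_filter, mem_univ, true_and] at hul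
      exact hw₀r (hul _ hw₀)
    have hint : x ∈ internal := by simpa [hinternal] using ⟨_, hw₀, hw₀r⟩
    obtain ⟨w, hw, hnot⟩ := exists_child_not_isDescendant hroot (N := j + 1)
      (by rw [iterate_succ_apply', hx, hcr]) hxr ((hsub x u).1 hux) hne (children := children x)
      (fun w hw => by simp only [hchildren, mem_filter] at hw; exact hw.2.1)
      (by rw [hbinary x hint hxr]; norm_num)
    exact ⟨w, hw, u, ⟨hul, hux, hMu⟩, hnot⟩
  obtain ⟨x, hx, U, hU⟩ := exists_descent hstep
  obtain ⟨-, a, ha, hax⟩ := exists_leaf_iterate_eq hroot hc hcr hdepth hbelow hx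
  rw [Nat.sub_self, iterate_zero_apply] at hax
  subst hax
  refine ⟨a, ha, U, injective_of_descent (fun i => (hsub _ _).1 (hU i).1.2.1) (fun i => (hU i).2),
    fun i => ⟨(hU i).1.1, fun h => (hU i).2 (h ▸ ⟨_, rfl⟩), (hU i).1.2⟩⟩

open scoped Classical in
/-- The adversarial descent in the Ω(log n) lower bound: in a binary lower-bound tree
of depth `k`, for any matching `M` of agents (leaves) to items (internal vertices) there
is a leaf agent `a` and `k` distinct "unlucky" agents, one at each level along the path
from the root's child to `a`, each matched outside the subtree at its level, none equal to `a`. -/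
theorem stmt12 {V : Type*} [Fintype V] (r : V) (par : V → V) (k : ℕ)
    (hroot : par r = r) (hreach : ∀ v, ∃ m, par^[m] v = r)
    (leaves internal : Finset V)
    (hleaves : leaves = Finset.univ.filter (fun v => ∀ u, par u = v → u = r))
    (hinternal : internal = Finset.univ.filter (fun v => ∃ u, par u = v ∧ u ≠ r))
    (subtree : V → Finset V)
    (hsubtree : ∀ v, subtree v = Finset.univ.filter (fun u => ∃ m, par^[m] u = v))
    (children : V → Finset V)
    (hchildren : ∀ v, children v = Finset.univ.filter (fun u => par u = v ∧ u ≠ r))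
    -- the root has a single child `c`
    (c : V) (hc : c ≠ r) (hcr : par c = r) (hconly : ∀ u, par u = r → u ≠ r → u = c)
    -- every non-root internal vertex has exactly two children
    (hbinary : ∀ v ∈ internal, v ≠ r → (children v).card = 2)
    -- every leaf is at depth exactly k+1 (so the tree has 2^k leaves)
    (hdepth : ∀ a ∈ leaves, par^[k + 1] a = r ∧ ∀ m ≤ k, par^[m] a ≠ r)
    -- every subtree rooted at a non-root vertex has one more agent than items
    (hcount : ∀ v, v ≠ r → (leaves ∩ subtree v).card = (internal ∩ subtree v).card + 1)
    (M : V → V) (hM : Set.BijOn M ↑leaves ↑internal) :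
    ∃ a ∈ leaves, ∃ U : Fin k → V, Function.Injective U ∧
      ∀ i : Fin k, U i ∈ leaves ∧ U i ≠ a ∧
        U i ∈ subtree (par^[k - (i : ℕ)] a) ∧
        M (U i) ∉ subtree (par^[k - (i : ℕ)] a) :=
  stmt12_general r par k hroot leaves internal hleaves hinternal subtree hsubtree children hchildren
    c hc hcr hbinary hdepth hcount M hM
end

section
/- Let (X, d) be a finite metric space with point sets A (agents) and B (items), |A| = |B| = n, and suppose M is a perfect matching (bijection A → B) such that for every subset S ⊆ A ∪ B, |{(a, M a) : a ∈ S, M a ∉ S or a ∉ S, M a ∈ S}| ≤ β · Σ_{(u,v) crossing S} p(u,v), where p is a fractional matching. Suppose further the metric d satisfies Σ_S γ_S·d_S(u,v) ≤ d(u,v) ≤ L·Σ_S γ_S·d_S(u,v) for all u, v, where γ_S ≥ 0 and d_S(u,v) = 1 if exactly one of u, v is in S and 0 otherwise. Then Σ_{a ∈ A} d(a, M a) ≤ L·β·Σ_{(u,v) ∈ A×B} p(u,v)·d(u,v). -/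
/-!
Write `ρ(u, v) = ∑_S γ_S d_S(u, v)` for the conic combination of cut metrics. Both the cost
of `M` and the cost of `p` are linear in the metric, so thinness, which compares them cut by
cut, passes to `ρ` with the nonnegative weights `γ_S`: `cost_M(ρ) ≤ β cost_p(ρ)`. The
distortion bounds `ρ ≤ d ≤ L ρ` then transfer this to `d` at the price of a factor `L`.
-/

open Finset

section MatchingCost

variable {α ι : Type*}

def matchingCost (A : Finset α) (M : α → α) (d : α → α → ℝ) : ℝ :=
  ∑ a ∈ A, d a (M a)

def fractionalCost (A B : Finset α) (p d : α → α → ℝ) : ℝ :=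
  ∑ u ∈ A, ∑ v ∈ B, p u v * d u v

def conicCombination (P : Finset ι) (γ : ι → ℝ) (d : ι → α → α → ℝ) (u v : α) : ℝ :=
  ∑ S ∈ P, γ S * d S u v

variable {A B : Finset α} {M : α → α} {p : α → α → ℝ}

theorem matchingCost_mono {d d' : α → α → ℝ} (h : ∀ a ∈ A, d a (M a) ≤ d' a (M a)) :
    matchingCost A M d ≤ matchingCost A M d' :=
  sum_le_sum h

theorem fractionalCost_mono (hp : ∀ u v, 0 ≤ p u v) {d d' : α → α → ℝ}
    (h : ∀ u v, d u v ≤ d' u v) :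
    fractionalCost A B p d ≤ fractionalCost A B p d' :=
  sum_le_sum fun u _ ↦ sum_le_sum fun v _ ↦ mul_le_mul_of_nonneg_left (h u v) (hp u v)

theorem matchingCost_const_mul (L : ℝ) (d : α → α → ℝ) :
    matchingCost A M (fun u v ↦ L * d u v) = L * matchingCost A M d :=
  (mul_sum _ _ _).symm

theorem matchingCost_conicCombination (P : Finset ι) (γ : ι → ℝ) (d : ι → α → α → ℝ) :
    matchingCost A M (conicCombination P γ d) = ∑ S ∈ P, γ S * matchingCost A M (d S) := by
  simp only [matchingCost, conicCombination, mul_sum]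
  exact sum_comm

theorem fractionalCost_conicCombination (P : Finset ι) (γ : ι → ℝ) (d : ι → α → α → ℝ) :
    fractionalCost A B p (conicCombination P γ d) =
      ∑ S ∈ P, γ S * fractionalCost A B p (d S) := by
  simp only [fractionalCost, conicCombination, mul_sum, mul_left_comm (p _ _)]
  rw [sum_comm (s := P)]
  exact sum_congr rfl fun u _ ↦ sum_comm

theorem matchingCost_conicCombination_le {P : Finset ι} {γ : ι → ℝ} (hγ : ∀ S, 0 ≤ γ S)
    {d : ι → α → α → ℝ} {β : ℝ}
    (hthin : ∀ S ∈ P, matchingCost A M (d S) ≤ β * fractionalCost A B p (d S)) :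
    matchingCost A M (conicCombination P γ d) ≤
      β * fractionalCost A B p (conicCombination P γ d) := by
  rw [matchingCost_conicCombination, fractionalCost_conicCombination, mul_sum]
  refine sum_le_sum fun S hS ↦ ?_
  rw [mul_left_comm]
  exact mul_le_mul_of_nonneg_left (hthin S hS) (hγ S)

end MatchingCost

theorem stmt13_general {X : Type*} [MetricSpace X] [DecidableEq X]
    (A B : Finset X)
    (M : X → X)
    (p : X → X → ℝ) (hp : ∀ u v, 0 ≤ p u v)
    (β L : ℝ) (hβ : 0 ≤ β) (hL : 0 ≤ L)
    (dS : Finset X → X → X → ℝ)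
    (γ : Finset X → ℝ) (hγ : ∀ S, 0 ≤ γ S)
    (hthin : ∀ S ∈ (A ∪ B).powerset,
      (∑ a ∈ A, dS S a (M a)) ≤ β * ∑ u ∈ A, ∑ v ∈ B, p u v * dS S u v)
    (hembed : ∀ u v, (∑ S ∈ (A ∪ B).powerset, γ S * dS S u v) ≤ dist u v ∧
      dist u v ≤ L * ∑ S ∈ (A ∪ B).powerset, γ S * dS S u v) :
    ∑ a ∈ A, dist a (M a) ≤ L * β * ∑ u ∈ A, ∑ v ∈ B, p u v * dist u v := by
  set ρ := conicCombination (A ∪ B).powerset γ dS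
  calc matchingCost A M dist
      ≤ matchingCost A M (fun u v ↦ L * ρ u v) :=
        matchingCost_mono fun a _ ↦ (hembed a (M a)).2
    _ = L * matchingCost A M ρ := matchingCost_const_mul L ρ
    _ ≤ L * (β * fractionalCost A B p ρ) :=
        mul_le_mul_of_nonneg_left (matchingCost_conicCombination_le hγ hthin) hL
    _ ≤ L * β * fractionalCost A B p dist := by
        rw [← mul_assoc]
        exact mul_le_mul_of_nonneg_left
          (fractionalCost_mono hp fun u v ↦ (hembed u v).1) (mul_nonneg hL hβ)

/-- Thinness of a matching with respect to cuts, plus an `L`-distortion embedding of the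
metric into a conic combination of cut metrics, implies `cost(M) ≤ L·β·cost(p)`. -/
theorem stmt13 {X : Type*} [MetricSpace X] [DecidableEq X] (n : ℕ)
    (A B : Finset X) (hA : A.card = n) (hB : B.card = n)
    (M : X → X) (hM : Set.BijOn M ↑A ↑B)
    (p : X → X → ℝ) (hp : ∀ u v, 0 ≤ p u v)
    (β L : ℝ) (hβ : 0 ≤ β) (hL : 0 ≤ L)
    (dS : Finset X → X → X → ℝ)
    (hdS : ∀ S u v, dS S u v = if (u ∈ S) ↔ (v ∈ S) then 0 else 1)
    (γ : Finset X → ℝ) (hγ : ∀ S, 0 ≤ γ S)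
    (hthin : ∀ S ∈ (A ∪ B).powerset,
      (∑ a ∈ A, dS S a (M a)) ≤ β * ∑ u ∈ A, ∑ v ∈ B, p u v * dS S u v)
    (hembed : ∀ u v, (∑ S ∈ (A ∪ B).powerset, γ S * dS S u v) ≤ dist u v ∧
      dist u v ≤ L * ∑ S ∈ (A ∪ B).powerset, γ S * dS S u v) :
    ∑ a ∈ A, dist a (M a) ≤ L * β * ∑ u ∈ A, ∑ v ∈ B, p u v * dist u v :=
  stmt13_general A B M p hp β L hβ hL dS γ hγ hthin hembed
end

section
/- Consider the cycle graph on 4k vertices (k ≥ 1) with the fractional matching p assigning weight 1/2 to every edge. The cycle has exactly two perfect matchings M_odd (edges (2i-1, 2i)) and M_even (edges (2i, 2i+1), indices mod 4k). For the cut given by S = {1, 2, 5, 6, 9, 10, ..., 4i+1, 4i+2, ...}, the cut weight of p is k, while the number of edges of M_even crossing the cut is 2k and the number of edges of M_odd crossing the cut is 0. -/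
/-!
At each vertex a perfect matching of the cycle contains exactly one of the two incident edges,
so membership of edges alternates around the cycle and a perfect matching is determined by
whether it contains edge `0`; on a cycle of even length both choices close up. The cut
`{v | v ≡ 0, 1 (mod 4)}` separates the endpoints of edge `i` exactly when `i` is odd, so it is
crossed by all `2k` odd edges and by no even edge, and the all-`1/2` weighting gives it weight `k`.
-/

open Finset

lemma card_filter_range_mod_two_eq_one (n : ℕ) : #{i ∈ range n | i % 2 = 1} = n / 2 := by
  induction n with
  | zero => simp
  | succ m ih =>
    rw [range_add_one, filter_insert]
    split_ifs with h
    · rw [card_insert_of_notMem (by simp)]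
      omega
    · omega

lemma card_filter_eq_or_eq_eq_one_iff {α : Type*} [DecidableEq α] (s : Finset α) {a b : α}
    (hab : a ≠ b) : #{i ∈ s | i = a ∨ i = b} = 1 ↔ (a ∈ s ↔ b ∉ s) := by
  rw [filter_or, filter_eq', filter_eq']
  by_cases ha : a ∈ s <;> by_cases hb : b ∈ s <;> simp [ha, hb, hab]

section Cycle

/-! Vertices of the `n`-cycle are `0, …, n - 1`; edge `i` joins `i` and `(i + 1) % n`. -/

variable {n : ℕ}

def IsCyclePerfectMatching (n : ℕ) (M : Finset ℕ) : Prop :=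
  ∀ v ∈ range n, #{i ∈ M | i = v ∨ (i + 1) % n = v} = 1

lemma add_sub_one_mod_eq_ite {v : ℕ} (hv : v < n) :
    (v + n - 1) % n = if v = 0 then n - 1 else v - 1 := by
  split_ifs with h
  · subst h
    rw [zero_add, Nat.mod_eq_of_lt (by omega)]
  · rw [show v + n - 1 = v - 1 + n by omega, Nat.add_mod_right, Nat.mod_eq_of_lt (by omega)]

lemma succ_mod_eq_iff {i v : ℕ} (hi : i < n) (hv : v < n) :
    (i + 1) % n = v ↔ i = (v + n - 1) % n := by
  rw [add_sub_one_mod_eq_ite hv]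
  rcases Nat.lt_or_ge (i + 1) n with h | h
  · rw [Nat.mod_eq_of_lt h]
    split_ifs <;> omega
  · rw [show i + 1 = n by omega, Nat.mod_self]
    split_ifs <;> omega

lemma isCyclePerfectMatching_iff {M : Finset ℕ} (hn : 2 ≤ n) (hM : M ⊆ range n) :
    IsCyclePerfectMatching n M ↔ ∀ v < n, (v ∈ M ↔ (v + n - 1) % n ∉ M) := by
  refine forall_congr' fun v => ?_
  rw [mem_range]
  refine imp_congr_right fun hv => ?_
  have hpred : v ≠ (v + n - 1) % n := by
    rw [add_sub_one_mod_eq_ite hv]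
    split_ifs <;> omega
  rw [← card_filter_eq_or_eq_eq_one_iff M hpred,
    filter_congr fun i hi => or_congr_right (succ_mod_eq_iff (mem_range.1 (hM hi)) hv)]

lemma mem_iff_mod_two_of_alternating {M : Finset ℕ}
    (hM : ∀ v < n, (v ∈ M ↔ (v + n - 1) % n ∉ M)) :
    ∀ v < n, (v ∈ M ↔ (v % 2 = 0 ↔ 0 ∈ M)) := by
  intro v hv
  induction v with
  | zero => simp
  | succ v ih =>
    have hstep := hM (v + 1) hv
    rw [add_sub_one_mod_eq_ite hv, if_neg (by omega), Nat.add_sub_cancel, ih (by omega)] at hstep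
    rw [hstep, Nat.succ_mod_two_eq_zero_iff, ← Nat.mod_two_ne_zero]
    tauto

theorem isCyclePerfectMatching_iff_eq_even_or_odd {M : Finset ℕ} (hn : Even n)
    (hM : M ⊆ range n) :
    IsCyclePerfectMatching n M ↔
      M = {i ∈ range n | i % 2 = 0} ∨ M = {i ∈ range n | i % 2 = 1} := by
  obtain ⟨m, rfl⟩ := hn
  rcases Nat.eq_zero_or_pos m with rfl | hm
  · simp_all [IsCyclePerfectMatching]
  rw [isCyclePerfectMatching_iff (by omega) hM]
  constructor
  · intro halt
    have hparity := mem_iff_mod_two_of_alternating halt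
    have hmem : ∀ i, i ∈ M ↔ i < m + m ∧ (i % 2 = 0 ↔ 0 ∈ M) := fun i =>
      ⟨fun hi => ⟨mem_range.1 (hM hi), (hparity i (mem_range.1 (hM hi))).1 hi⟩,
        fun hi => (hparity i hi.1).2 hi.2⟩
    by_cases h0 : 0 ∈ M
    · left; ext i; simp [hmem i, h0]
    · right; ext i; simp [hmem i, h0]
  · rintro (rfl | rfl) <;>
    · intro v hv
      simp only [mem_filter, mem_range, add_sub_one_mod_eq_ite hv]
      split_ifs <;> omega

/-- The paper's cut `S = {1, 2, 5, 6, …}`, in `0`-indexed vertices. -/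
def modFourCut (n : ℕ) : Finset ℕ := {v ∈ range n | v % 4 = 0 ∨ v % 4 = 1}

lemma edge_crosses_modFourCut_iff {n i : ℕ} (hn : 4 ∣ n) (hi : i < n) :
    ¬(i ∈ modFourCut n ↔ (i + 1) % n ∈ modFourCut n) ↔ i % 2 = 1 := by
  obtain ⟨k, rfl⟩ := hn
  simp only [modFourCut, mem_filter, mem_range]
  rcases Nat.lt_or_ge (i + 1) (4 * k) with h | h
  · rw [Nat.mod_eq_of_lt h]; omega
  · rw [show i + 1 = 4 * k by omega, Nat.mod_self]; omega

end Cycle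

theorem stmt19_general (k : ℕ)
    (S : Finset ℕ)
    (hS : S = (Finset.range (4 * k)).filter (fun v => v % 4 = 0 ∨ v % 4 = 1))
    (Modd Meven : Finset ℕ)
    (hModd : Modd = (Finset.range (4 * k)).filter (fun i => i % 2 = 0))
    (hMeven : Meven = (Finset.range (4 * k)).filter (fun i => i % 2 = 1)) :
    -- the cut weight of the all-1/2 fractional matching is k
    (∑ i ∈ Finset.range (4 * k),
        if ¬((i ∈ S) ↔ ((i + 1) % (4 * k)) ∈ S) then (1 / 2 : ℝ) else 0) = k ∧
    -- the cycle has exactly two perfect matchings, Modd and Meven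
    (∀ Me ⊆ Finset.range (4 * k),
      ((∀ v ∈ Finset.range (4 * k),
          (Me.filter (fun i => i = v ∨ (i + 1) % (4 * k) = v)).card = 1) ↔
        (Me = Modd ∨ Me = Meven))) ∧
    -- Meven has 2k edges across the cut, Modd has none
    (Meven.filter (fun i => ¬((i ∈ S) ↔ ((i + 1) % (4 * k)) ∈ S))).card = 2 * k ∧
    (Modd.filter (fun i => ¬((i ∈ S) ↔ ((i + 1) % (4 * k)) ∈ S))).card = 0 := by
  subst hModd hMeven
  have hcross : ∀ i ∈ range (4 * k), ¬(i ∈ S ↔ (i + 1) % (4 * k) ∈ S) ↔ i % 2 = 1 :=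
    fun i hi => hS ▸ edge_crosses_modFourCut_iff (dvd_mul_right 4 k) (mem_range.1 hi)
  have hcard : #{i ∈ range (4 * k) | i % 2 = 1} = 2 * k := by
    rw [card_filter_range_mod_two_eq_one]; omega
  refine ⟨?_, fun M hM => isCyclePerfectMatching_iff_eq_even_or_odd ⟨2 * k, by ring⟩ hM, ?_, ?_⟩
  · rw [sum_congr rfl fun i hi => if_congr (hcross i hi) rfl rfl, ← sum_filter, sum_const, hcard,
      nsmul_eq_mul]
    push_cast; ring
  · rw [filter_true_of_mem fun i hi => (hcross i (mem_filter.1 hi).1).2 (mem_filter.1 hi).2, hcard]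
  · rw [filter_false_of_mem fun i hi => by
      rw [hcross i (mem_filter.1 hi).1]; exact Nat.mod_two_ne_one.2 (mem_filter.1 hi).2, card_empty]

/-- The 4k-cycle example (vertices `0,…,4k-1`, edge `i` joining `i` and `(i+1) % 4k`,
corresponding to the 1-indexed vertices `1,…,4k` of the paper): the fractional matching
giving weight 1/2 to each edge has weight `k` across the cut
`S = {1,2,5,6,…}` (0-indexed: vertices `≡ 0,1 (mod 4)`); the cycle has exactly two
perfect matchings, the odd edges `M_odd` (0-indexed even `i`) and the even edges
`M_even` (0-indexed odd `i`); `M_even` has `2k` edges across the cut and `M_odd` has none. -/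
theorem stmt19 (k : ℕ) (hk : 1 ≤ k)
    (S : Finset ℕ)
    (hS : S = (Finset.range (4 * k)).filter (fun v => v % 4 = 0 ∨ v % 4 = 1))
    (Modd Meven : Finset ℕ)
    (hModd : Modd = (Finset.range (4 * k)).filter (fun i => i % 2 = 0))
    (hMeven : Meven = (Finset.range (4 * k)).filter (fun i => i % 2 = 1)) :
    -- the cut weight of the all-1/2 fractional matching is k
    (∑ i ∈ Finset.range (4 * k),
        if ¬((i ∈ S) ↔ ((i + 1) % (4 * k)) ∈ S) then (1 / 2 : ℝ) else 0) = k ∧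
    -- the cycle has exactly two perfect matchings, Modd and Meven
    (∀ Me ⊆ Finset.range (4 * k),
      ((∀ v ∈ Finset.range (4 * k),
          (Me.filter (fun i => i = v ∨ (i + 1) % (4 * k) = v)).card = 1) ↔
        (Me = Modd ∨ Me = Meven))) ∧
    -- Meven has 2k edges across the cut, Modd has none
    (Meven.filter (fun i => ¬((i ∈ S) ↔ ((i + 1) % (4 * k)) ∈ S))).card = 2 * k ∧
    (Modd.filter (fun i => ¬((i ∈ S) ↔ ((i + 1) % (4 * k)) ∈ S))).card = 0 :=
  stmt19_general k S hS Modd Meven hModd hMeven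
end
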